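/- arXiv:0707.2728 — 2 statements merged into one kernel-verified Lean document; each statement's English description precedes it below -/
import Mathlib

section
/- For v>-1, 0<q<1, a>0 and nonzero complex numbers y,z with y^2 \neq z^2, the Jackson q-integral \int_0^a j_v(yt,q^2) j_v(zt,q^2) t^{2v+1} d_q t equals \frac{1-q}{1-q^{2v+2}} a^{2v+2} \cdot \frac{y^2 j_{v+1}(ay,q^2) j_v(a q^{-1} z, q^2) - z^2 j_{v+1}(az,q^2) j_v(a q^{-1} y, q^2)}{y^2 - z^2}. -/
noncomputable def qPoch (a q : ℝ) (n : ℕ) : ℝ := ∏ i ∈ Finset.range n, (1 - a * q ^ i)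

noncomputable def qPochInf (a q : ℝ) : ℝ := ∏' i : ℕ, (1 - a * q ^ i)

/-- Normalized Hahn–Exton q-Bessel function `j_v(z, q²)` (complex argument). -/
noncomputable def jv (v q : ℝ) (z : ℂ) : ℂ :=
  ∑' n : ℕ, (-1 : ℂ) ^ n * (q : ℂ) ^ (n * (n + 1)) * z ^ (2 * n) /
    ((qPoch (q ^ 2) (q ^ 2) n : ℝ) * (qPoch (q ^ (2 * v + 2 : ℝ)) (q ^ 2) n : ℝ) : ℝ)

/-- Normalized Hahn–Exton q-Bessel function `j_v(x, q²)` (real argument). -/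
noncomputable def jvR (v q x : ℝ) : ℝ :=
  ∑' n : ℕ, (-1 : ℝ) ^ n * q ^ (n * (n + 1)) * x ^ (2 * n) /
    (qPoch (q ^ 2) (q ^ 2) n * qPoch (q ^ (2 * v + 2 : ℝ)) (q ^ 2) n)

noncomputable def cqv (q v : ℝ) : ℝ :=
  (1 / (1 - q)) * qPochInf (q ^ (2 * v + 2 : ℝ)) (q ^ 2) / qPochInf (q ^ 2) (q ^ 2)

/-- Jackson q-integral on `[0,a]`. -/
noncomputable def qInt0 (q a : ℝ) (f : ℝ → ℝ) : ℝ :=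
  (1 - q) * a * ∑' n : ℕ, q ^ n * f (a * q ^ n)

/-- Jackson q-integral on `[0,∞)`. -/
noncomputable def qIntInf (q : ℝ) (f : ℝ → ℝ) : ℝ :=
  (1 - q) * ∑' n : ℤ, q ^ n * f (q ^ n)

/-- Complex-valued Jackson q-integral on `[0,a]`. -/
noncomputable def qIntC0 (q a : ℝ) (f : ℝ → ℂ) : ℂ :=
  ((1 - q) * a : ℝ) * ∑' n : ℕ, (q ^ n : ℝ) * f (a * q ^ n)

/-- The operator `T_a^v`. -/
noncomputable def Tav (q v a : ℝ) (u : ℝ → ℝ) (x : ℝ) : ℝ :=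
  cqv q v * qInt0 q a (fun t => u t * jvR v q (x * t) * t ^ (2 * v + 1 : ℝ))

/-- The q-Bessel Fourier transform `𝓕_{q,v}`. -/
noncomputable def Fqv (q v : ℝ) (f : ℝ → ℝ) (x : ℝ) : ℝ :=
  cqv q v * qIntInf q (fun t => f t * jvR v q (x * t) * t ^ (2 * v + 1 : ℝ))

/-- Membership in `L²_{q,v,a}` (functions on `[0,a]_q`). -/
def memL2a (q v a : ℝ) (f : ℝ → ℝ) : Prop :=
  Summable (fun n : ℕ => q ^ n * (f (a * q ^ n)) ^ 2 * (a * q ^ n) ^ (2 * v + 1 : ℝ))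

/-- Membership in `L²_{q,2,v}` (even functions on `ℝ_q`, given on `ℝ_q⁺`). -/
def memL2 (q v : ℝ) (f : ℝ → ℝ) : Prop :=
  Summable (fun n : ℤ => q ^ n * (f (q ^ n)) ^ 2 * ((q : ℝ) ^ n) ^ (2 * v + 1 : ℝ))

/-- Inner product on `L²_{q,2,v}`. -/
noncomputable def qInner (q v : ℝ) (f g : ℝ → ℝ) : ℝ :=
  qIntInf q (fun t => f t * g t * t ^ (2 * v + 1 : ℝ))

/-- The kernel `k(x,y)`. -/
noncomputable def kker (q v a x y : ℝ) : ℝ :=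
  cqv q v ^ 2 * qInt0 q a (fun t => jvR v q (x * t) * jvR v q (y * t) * t ^ (2 * v + 1 : ℝ))


/-!
Write `p = q ^ (2v+2)` and `j = j_v`, `J = j_{v+1}`. Comparing power series gives the contiguous
relations `(1 - p) (j(qw) - j(w)) = q²w² J(qw)` and `J(w) - p J(qw) = (1 - p) j(w)`. Together they
show that the q-Wronskian `W(s) = y² J(sy) j(sz/q) - z² J(sz) j(sy/q)` satisfies
`W(s) - p W(qs) = (1 - p) (y² - z²) j(sy) j(sz)`. Since the Jackson integral equals
`(1 - q) a^(2v+2) Σ pⁿ j(aqⁿy) j(aqⁿz)`, the series telescopes, and as `W` stays bounded along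
`aqⁿ → 0` while `|p| < 1`, its sum is `W(a) / ((1 - p) (y² - z²))`.
-/

open Filter Topology Asymptotics

lemma qPoch_succ (a Q : ℝ) (n : ℕ) : qPoch a Q (n + 1) = qPoch a Q n * (1 - a * Q ^ n) :=
  Finset.prod_range_succ _ _

lemma qPoch_succ' (a Q : ℝ) (n : ℕ) : qPoch a Q (n + 1) = (1 - a) * qPoch (a * Q) Q n := by
  rw [qPoch, Finset.prod_range_succ', pow_zero, mul_one, mul_comm]
  congr 1
  exact Finset.prod_congr rfl fun i _ => by ring

lemma one_sub_mul_pow_pos {a Q : ℝ} (ha : a < 1) (hQ0 : 0 ≤ Q) (hQ1 : Q ≤ 1) (n : ℕ) :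
    0 < 1 - a * Q ^ n := by
  rcases le_or_gt a 0 with h | h
  · linarith [mul_nonpos_of_nonpos_of_nonneg h (pow_nonneg hQ0 n)]
  · linarith [mul_le_of_le_one_right h.le (pow_le_one₀ hQ0 hQ1 (n := n))]

lemma qPoch_pos {a Q : ℝ} (ha : a < 1) (hQ0 : 0 ≤ Q) (hQ1 : Q ≤ 1) (n : ℕ) : 0 < qPoch a Q n :=
  Finset.prod_pos fun i _ => one_sub_mul_pow_pos ha hQ0 hQ1 i

-- The parameter `p` plays the role of `q ^ (2 * v + 2)`, so that `j_{v+1}` is the case `p * q ^ 2`.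
noncomputable def hahnExtonTerm (p q : ℝ) (z : ℂ) (n : ℕ) : ℂ :=
  (-1 : ℂ) ^ n * (q : ℂ) ^ (n * (n + 1)) * z ^ (2 * n) /
    ((qPoch (q ^ 2) (q ^ 2) n * qPoch p (q ^ 2) n : ℝ) : ℂ)

noncomputable def hahnExton (p q : ℝ) (z : ℂ) : ℂ := ∑' n, hahnExtonTerm p q z n

lemma jv_eq_hahnExton (v q : ℝ) : jv v q = hahnExton (q ^ (2 * v + 2 : ℝ)) q := rfl

lemma jv_add_one {q : ℝ} (hq : 0 < q) (v : ℝ) :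
    jv (v + 1) q = hahnExton (q ^ (2 * v + 2 : ℝ) * q ^ 2) q := by
  rw [jv_eq_hahnExton, show 2 * (v + 1) + 2 = (2 * v + 2) + (2 : ℕ) by push_cast; ring,
    Real.rpow_add hq, Real.rpow_natCast]

section Terms

variable {p q : ℝ}

lemma hahnExtonTerm_zero (z : ℂ) : hahnExtonTerm p q z 0 = 1 := by
  simp [hahnExtonTerm, qPoch]

lemma hahnExtonTerm_mul (c z : ℂ) (n : ℕ) :
    hahnExtonTerm p q (c * z) n = c ^ (2 * n) * hahnExtonTerm p q z n := by
  simp only [hahnExtonTerm]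
  ring

lemma hahnExtonTerm_succ (z : ℂ) (n : ℕ) :
    hahnExtonTerm p q z (n + 1) =
      -((q : ℂ) ^ 2 * ((q : ℂ) ^ 2) ^ n * z ^ 2) /
          ((1 - (q : ℂ) ^ 2 * ((q : ℂ) ^ 2) ^ n) * (1 - p * ((q : ℂ) ^ 2) ^ n)) *
        hahnExtonTerm p q z n := by
  simp only [hahnExtonTerm, qPoch_succ]
  push_cast
  rw [div_mul_div_comm]
  congr 1 <;> ring

lemma norm_hahnExtonTerm_le {w : ℂ} {R : ℝ} (h : ‖w‖ ≤ R) (n : ℕ) :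
    ‖hahnExtonTerm p q w n‖ ≤ ‖hahnExtonTerm p q R n‖ := by
  have hnorm (z : ℂ) : ‖hahnExtonTerm p q z n‖ = ‖z‖ ^ (2 * n) * ‖hahnExtonTerm p q 1 n‖ := by
    rw [← norm_pow, ← norm_mul, ← hahnExtonTerm_mul, mul_one]
  rw [hnorm w, hnorm R, Complex.norm_real, Real.norm_of_nonneg ((norm_nonneg w).trans h)]
  gcongr

variable (hq : |q| < 1)
include hq

lemma summable_norm_hahnExtonTerm (z : ℂ) : Summable fun n => ‖hahnExtonTerm p q z n‖ := by
  have hq2 : ‖(q : ℂ) ^ 2‖ < 1 := by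
    rwa [norm_pow, Complex.norm_real, Real.norm_eq_abs, sq_abs, sq_lt_one_iff_abs_lt_one]
  have hx := tendsto_pow_atTop_nhds_zero_of_norm_lt_one hq2
  have hratio : Tendsto (fun n => -((q : ℂ) ^ 2 * ((q : ℂ) ^ 2) ^ n * z ^ 2) /
      ((1 - (q : ℂ) ^ 2 * ((q : ℂ) ^ 2) ^ n) * (1 - p * ((q : ℂ) ^ 2) ^ n))) atTop (𝓝 0) := by
    rw [show (0 : ℂ) = -((q : ℂ) ^ 2 * 0 * z ^ 2) / ((1 - (q : ℂ) ^ 2 * 0) * (1 - p * 0)) by simp]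
    exact ((hx.const_mul _).mul_const (z ^ 2)).neg.div
      ((tendsto_const_nhds.sub (hx.const_mul _)).mul (tendsto_const_nhds.sub (hx.const_mul _)))
      (by simp)
  refine summable_of_ratio_norm_eventually_le (r := 1 / 2) (by norm_num) ?_
  filter_upwards [hratio.norm.eventually (ge_mem_nhds (by norm_num : ‖(0 : ℂ)‖ < 1 / 2))]
    with n hn
  rw [norm_norm, norm_norm, hahnExtonTerm_succ, norm_mul]
  exact mul_le_mul_of_nonneg_right hn (norm_nonneg _)

lemma hasSum_hahnExtonTerm (z : ℂ) : HasSum (hahnExtonTerm p q z ·) (hahnExton p q z) :=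
  (summable_norm_hahnExtonTerm hq z).of_norm.hasSum

lemma continuous_hahnExton : Continuous (hahnExton p q) := by
  refine continuous_iff_continuousAt.2 fun w => ?_
  have hball : ContinuousOn (fun z => ∑' n, hahnExtonTerm p q z n) (Metric.ball 0 (‖w‖ + 1)) :=
    continuousOn_tsum (fun n => (by unfold hahnExtonTerm; fun_prop : Continuous _).continuousOn)
      (summable_norm_hahnExtonTerm hq _)
      fun n x hx => norm_hahnExtonTerm_le (mem_ball_zero_iff.1 hx).le n
  exact hball.continuousAt (Metric.isOpen_ball.mem_nhds (by simp))

end Terms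

section Contiguous

variable {p q : ℝ} (hp : p < 1) (hq : |q| < 1)
include hp hq

lemma hahnExtonTerm_mul_sq (z : ℂ) (n : ℕ) :
    (1 - p * ((q : ℂ) ^ 2) ^ n) * hahnExtonTerm (p * q ^ 2) q z n =
      (1 - p) * hahnExtonTerm p q z n := by
  have hq2 : q ^ 2 < 1 := (sq_lt_one_iff_abs_lt_one q).2 hq
  have hpq : p * q ^ 2 < 1 := by simpa using one_sub_mul_pow_pos hp (sq_nonneg q) hq2.le 1
  have hA := qPoch_pos hq2 (sq_nonneg q) hq2.le n
  have hB := qPoch_pos hp (sq_nonneg q) hq2.le n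
  have hC := qPoch_pos hpq (sq_nonneg q) hq2.le n
  have key := congrArg ((↑) : ℝ → ℂ) ((qPoch_succ p (q ^ 2) n).symm.trans (qPoch_succ' p (q ^ 2) n))
  push_cast at key
  simp only [hahnExtonTerm]
  push_cast
  rw [mul_div_assoc', mul_div_assoc', div_eq_div_iff
    (mul_ne_zero (Complex.ofReal_ne_zero.2 hA.ne') (Complex.ofReal_ne_zero.2 hC.ne'))
    (mul_ne_zero (Complex.ofReal_ne_zero.2 hA.ne') (Complex.ofReal_ne_zero.2 hB.ne'))]
  linear_combination ((-1 : ℂ) ^ n * (q : ℂ) ^ (n * (n + 1)) * z ^ (2 * n) *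
    qPoch (q ^ 2) (q ^ 2) n) * key

lemma hahnExtonTerm_sub_mul (w : ℂ) (n : ℕ) :
    hahnExtonTerm (p * q ^ 2) q w n - p * hahnExtonTerm (p * q ^ 2) q (q * w) n =
      (1 - p) * hahnExtonTerm p q w n := by
  rw [hahnExtonTerm_mul, ← hahnExtonTerm_mul_sq hp hq]
  ring

lemma hahnExtonTerm_mul_sub_succ (w : ℂ) (n : ℕ) :
    (1 - p) * (hahnExtonTerm p q (q * w) (n + 1) - hahnExtonTerm p q w (n + 1)) =
      q ^ 2 * w ^ 2 * hahnExtonTerm (p * q ^ 2) q (q * w) n := by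
  have hq2 : q ^ 2 < 1 := (sq_lt_one_iff_abs_lt_one q).2 hq
  have h1 : (1 - (q : ℂ) ^ 2 * ((q : ℂ) ^ 2) ^ n) ≠ 0 := by
    exact_mod_cast (one_sub_mul_pow_pos hq2 (sq_nonneg q) hq2.le n).ne'
  have h2 : (1 - p * ((q : ℂ) ^ 2) ^ n) ≠ 0 := by
    exact_mod_cast (one_sub_mul_pow_pos hp (sq_nonneg q) hq2.le n).ne'
  have hshift := hahnExtonTerm_mul_sq hp hq w n
  rw [hahnExtonTerm_mul, hahnExtonTerm_mul, hahnExtonTerm_succ]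
  field_simp
  linear_combination
    -((q : ℂ) ^ 2 * w ^ 2 * (1 - (q : ℂ) ^ 2 * ((q : ℂ) ^ 2) ^ n) * (q : ℂ) ^ (2 * n)) * hshift

lemma hahnExton_mul_sub (w : ℂ) :
    (1 - p) * (hahnExton p q (q * w) - hahnExton p q w) =
      q ^ 2 * w ^ 2 * hahnExton (p * q ^ 2) q (q * w) := by
  have hsum := ((hasSum_hahnExtonTerm (p := p) hq (q * w)).sub
    (hasSum_hahnExtonTerm (p := p) hq w)).mul_left (1 - (p : ℂ))
  rw [← hasSum_nat_add_iff' 1] at hsum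
  simp only [Finset.sum_range_one, hahnExtonTerm_zero, sub_self, mul_zero, sub_zero,
    hahnExtonTerm_mul_sub_succ hp hq] at hsum
  exact hsum.unique ((hasSum_hahnExtonTerm hq _).mul_left _)

lemma hahnExton_sub_mul (w : ℂ) :
    hahnExton (p * q ^ 2) q w - p * hahnExton (p * q ^ 2) q (q * w) =
      (1 - p) * hahnExton p q w := by
  refine ((hasSum_hahnExtonTerm hq w).sub ((hasSum_hahnExtonTerm hq (q * w)).mul_left _)).unique ?_
  simpa only [hahnExtonTerm_sub_mul hp hq] using (hasSum_hahnExtonTerm hq w).mul_left (1 - (p : ℂ))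

end Contiguous

lemma hasSum_pow_mul_sub_mul_succ {𝕜 : Type*} [NormedField 𝕜] [CompleteSpace 𝕜] {r : 𝕜} {f : ℕ → 𝕜}
    (hr : ‖r‖ < 1) (hf : f =O[atTop] fun _ => (1 : ℝ)) :
    HasSum (fun m => r ^ m * (f m - r * f (m + 1))) (f 0) := by
  have hF : Summable fun m => r ^ m * f m := by
    refine summable_of_isBigO_nat (summable_geometric_of_lt_one (norm_nonneg r) hr) ?_
    simpa [norm_pow] using ((isBigO_refl (fun m => r ^ m) atTop).norm_right).mul hf
  have hshift := (hasSum_nat_add_iff' 1).2 hF.hasSum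
  simpa [pow_succ, mul_assoc, mul_sub] using hF.hasSum.sub hshift

noncomputable def lommelWronskian (p q : ℝ) (y z s : ℂ) : ℂ :=
  y ^ 2 * hahnExton (p * q ^ 2) q (s * y) * hahnExton p q (s / q * z) -
    z ^ 2 * hahnExton (p * q ^ 2) q (s * z) * hahnExton p q (s / q * y)

section Lommel

variable {p q : ℝ}

lemma lommelWronskian_sub_mul (hp : p < 1) (hq : |q| < 1) (hq0 : q ≠ 0) (y z s : ℂ) :
    lommelWronskian p q y z s - p * lommelWronskian p q y z (q * s) =
      (1 - p) * (y ^ 2 - z ^ 2) * (hahnExton p q (y * s) * hahnExton p q (z * s)) := by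
  have hqc : (q : ℂ) ≠ 0 := Complex.ofReal_ne_zero.2 hq0
  have h1p : (1 - p : ℂ) ≠ 0 := by exact_mod_cast (sub_pos.2 hp).ne'
  obtain ⟨t, rfl⟩ : ∃ t, s = q * t := ⟨s / q, (mul_div_cancel₀ s hqc).symm⟩
  have R1y := hahnExton_mul_sub hp hq (t * y)
  have R1z := hahnExton_mul_sub hp hq (t * z)
  have R2y := hahnExton_sub_mul hp hq (q * t * y)
  have R2z := hahnExton_sub_mul hp hq (q * t * z)
  simp only [lommelWronskian, mul_div_cancel_left₀ _ hqc]
  refine mul_left_cancel₀ h1p ?_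
  -- bring the arguments of `hahnExton` to one normal form, so that `ring` sees equal atoms
  ring_nf at R1y R1z R2y R2z ⊢
  linear_combination (-y ^ 2 * hahnExton (p * q ^ 2) q (q * t * y)) * R1z
    + (z ^ 2 * hahnExton (p * q ^ 2) q (q * t * z)) * R1y
    + ((1 - p) * y ^ 2 * hahnExton p q (q * t * z)) * R2y
    - ((1 - p) * z ^ 2 * hahnExton p q (q * t * y)) * R2z

lemma hasSum_lommel (hp : |p| < 1) (hq : |q| < 1) (hq0 : q ≠ 0) {y z : ℂ} (hyz : y ^ 2 ≠ z ^ 2)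
    (s : ℂ) :
    HasSum
      (fun m => (p : ℂ) ^ m * (hahnExton p q (y * (s * q ^ m)) * hahnExton p q (z * (s * q ^ m))))
      (lommelWronskian p q y z s / ((1 - p) * (y ^ 2 - z ^ 2))) := by
  have hp1 : p < 1 := (abs_lt.1 hp).2
  have hc : ((1 - p) * (y ^ 2 - z ^ 2) : ℂ) ≠ 0 :=
    mul_ne_zero (by exact_mod_cast (sub_pos.2 hp1).ne') (sub_ne_zero.2 hyz)
  have hcont : Continuous (lommelWronskian p q y z) := by
    have hj := continuous_hahnExton (p := p) hq
    have hJ := continuous_hahnExton (p := p * q ^ 2) hq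
    unfold lommelWronskian
    fun_prop
  have hlim : Tendsto (fun m : ℕ => lommelWronskian p q y z (s * q ^ m)) atTop
      (𝓝 (lommelWronskian p q y z 0)) := by
    have hq' : ‖(q : ℂ)‖ < 1 := by simpa using hq
    have hx : Tendsto (fun m : ℕ => s * (q : ℂ) ^ m) atTop (𝓝 0) := by
      simpa using (tendsto_pow_atTop_nhds_zero_of_norm_lt_one hq').const_mul s
    exact (hcont.tendsto 0).comp hx
  have hstep (m : ℕ) :
      lommelWronskian p q y z (s * q ^ m) - p * lommelWronskian p q y z (s * q ^ (m + 1)) =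
        (1 - p) * (y ^ 2 - z ^ 2) *
          (hahnExton p q (y * (s * q ^ m)) * hahnExton p q (z * (s * q ^ m))) := by
    rw [show s * (q : ℂ) ^ (m + 1) = q * (s * q ^ m) by ring]
    exact lommelWronskian_sub_mul hp1 hq hq0 y z _
  have htel := hasSum_pow_mul_sub_mul_succ (r := (p : ℂ)) (by simpa using hp) (hlim.isBigO_one ℝ)
  simp only [hstep, pow_zero, mul_one] at htel
  rw [← hasSum_mul_left_iff hc, mul_div_cancel₀ _ hc]
  simpa only [mul_left_comm] using htel

end Lommel

lemma qIntC0_mul_rpow {q a : ℝ} (hq : 0 < q) (ha : 0 < a) (s : ℝ) (f : ℝ → ℂ) :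
    qIntC0 q a (fun t => f t * ((t ^ s : ℝ) : ℂ)) =
      (((1 - q) * a ^ (s + 1) : ℝ) : ℂ) *
        ∑' n : ℕ, (((q ^ (s + 1)) ^ n : ℝ) : ℂ) * f (a * q ^ n) := by
  have hweight (n : ℕ) : q ^ n * (a * q ^ n) ^ s = a ^ s * (q ^ (s + 1)) ^ n := by
    rw [Real.mul_rpow ha.le (by positivity), ← Real.rpow_pow_comm hq.le, Real.rpow_add_one hq.ne',
      mul_pow]
    ring
  have hconst : (1 - q) * a ^ (s + 1) = (1 - q) * a * a ^ s := by
    rw [Real.rpow_add_one ha.ne']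
    ring
  rw [qIntC0, hconst, Complex.ofReal_mul _ (a ^ s), mul_assoc]
  congr 1
  rw [← tsum_mul_left]
  refine tsum_congr fun n => ?_
  have h := congrArg ((↑) : ℝ → ℂ) (hweight n)
  push_cast at h ⊢
  linear_combination f (a * q ^ n) * h

theorem q_lommel_integral_general (q v a : ℝ) (hq0 : 0 < q) (hq1 : q < 1) (hv : -1 < v)
    (ha : 0 < a) (y z : ℂ) (hyz : y ^ 2 ≠ z ^ 2) :
    qIntC0 q a (fun t => jv v q (y * t) * jv v q (z * t) * ((t ^ (2 * v + 1 : ℝ) : ℝ) : ℂ)) =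
      (((1 - q) / (1 - q ^ (2 * v + 2 : ℝ)) * a ^ (2 * v + 2 : ℝ) : ℝ) : ℂ) *
        ((y ^ 2 * jv (v + 1) q ((a : ℂ) * y) * jv v q (((a / q : ℝ) : ℂ) * z) -
          z ^ 2 * jv (v + 1) q ((a : ℂ) * z) * jv v q (((a / q : ℝ) : ℂ) * y)) /
          (y ^ 2 - z ^ 2)) := by
  have hP0 : 0 < q ^ (2 * v + 2 : ℝ) := Real.rpow_pos_of_pos hq0 _
  have hP1 : q ^ (2 * v + 2 : ℝ) < 1 := Real.rpow_lt_one hq0.le hq1 (by linarith)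
  have hsum := hasSum_lommel (abs_lt.2 ⟨by linarith, hP1⟩) (abs_lt.2 ⟨by linarith, hq1⟩) hq0.ne'
    hyz (a : ℂ)
  rw [qIntC0_mul_rpow hq0 ha, show (2 * v + 1 + 1 : ℝ) = 2 * v + 2 by ring, jv_add_one hq0,
    jv_eq_hahnExton]
  push_cast
  rw [hsum.tsum_eq, lommelWronskian]
  have h1P : (1 - ((q ^ (2 * v + 2 : ℝ) : ℝ) : ℂ)) ≠ 0 := by exact_mod_cast (sub_pos.2 hP1).ne'
  field_simp [sub_ne_zero.2 hyz]

/-- the q-Lommel type integral (Koornwinder–Swarttouw). -/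
theorem q_lommel_integral (q v a : ℝ) (hq0 : 0 < q) (hq1 : q < 1) (hv : -1 < v)
    (ha : 0 < a) (y z : ℂ) (hy : y ≠ 0) (hz : z ≠ 0) (hyz : y ^ 2 ≠ z ^ 2) :
    qIntC0 q a (fun t => jv v q (y * t) * jv v q (z * t) * ((t ^ (2 * v + 1 : ℝ) : ℝ) : ℂ)) =
      (((1 - q) / (1 - q ^ (2 * v + 2 : ℝ)) * a ^ (2 * v + 2 : ℝ) : ℝ) : ℂ) *
        ((y ^ 2 * jv (v + 1) q ((a : ℂ) * y) * jv v q (((a / q : ℝ) : ℂ) * z) -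
          z ^ 2 * jv (v + 1) q ((a : ℂ) * z) * jv v q (((a / q : ℝ) : ℂ) * y)) /
          (y ^ 2 - z ^ 2)) :=
  q_lommel_integral_general q v a hq0 hq1 hv ha y z hyz
end

section
/- The integral operator T_a^v on L^2_{q,v,a} is injective: if T_a^v \psi = 0 on [0,a]_q, then \psi = 0 on [0,a]_q. Consequently 0 is not an eigenvalue of T_a^v. -/
open Filter Topology FormalMultilinearSeries

lemma pow_one_sub_le_qPoch {c r : ℝ} (hc0 : 0 ≤ c) (hc1 : c ≤ 1) (hr0 : 0 ≤ r) (hr1 : r ≤ 1)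
    (n : ℕ) : (1 - c) ^ n ≤ qPoch c r n := by
  calc (1 - c) ^ n = ∏ _i ∈ Finset.range n, (1 - c) := by simp
    _ ≤ qPoch c r n := Finset.prod_le_prod (fun _ _ => by linarith) fun i _ => by
      nlinarith [pow_le_one₀ hr0 hr1 (n := i), pow_nonneg hr0 i]

lemma qPoch_pos_s5 {c r : ℝ} (hc0 : 0 ≤ c) (hc1 : c < 1) (hr0 : 0 ≤ r) (hr1 : r ≤ 1) (n : ℕ) :
    0 < qPoch c r n :=
  (pow_pos (by linarith) n).trans_le (pow_one_sub_le_qPoch hc0 hc1.le hr0 hr1 n)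

lemma qPochInf_pos {c r : ℝ} (hc0 : 0 ≤ c) (hc1 : c < 1) (hr0 : 0 ≤ r) (hr1 : r < 1) :
    0 < qPochInf c r := by
  have hfactor : ∀ i : ℕ, 0 < 1 - c * r ^ i := fun i => by
    nlinarith [pow_le_one₀ hr0 hr1.le (n := i), pow_nonneg hr0 i]
  have hlog : Summable fun i : ℕ => Real.log (1 - c * r ^ i) := by
    simpa only [sub_eq_add_neg] using Real.summable_log_one_add_of_summable
      ((summable_geometric_of_lt_one hr0 hr1).mul_left c).neg
  rw [qPochInf, ← Real.rexp_tsum_eq_tprod hfactor hlog]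
  exact Real.exp_pos _

lemma cqv_pos {q v : ℝ} (hq0 : 0 < q) (hq1 : q < 1) (hv : -1 < v) : 0 < cqv q v := by
  have hq2 : q ^ 2 < 1 := by nlinarith
  have h₁ := qPochInf_pos (Real.rpow_pos_of_pos hq0 (2 * v + 2)).le
    (Real.rpow_lt_one hq0.le hq1 (by linarith)) (sq_nonneg q) hq2
  have h₂ := qPochInf_pos (sq_nonneg q) hq2 (sq_nonneg q) hq2
  have : 0 < 1 - q := by linarith
  rw [cqv]
  positivity

noncomputable def jvRCoeff (v q : ℝ) (k : ℕ) : ℝ :=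
  (-1) ^ k * q ^ (k * (k + 1)) / (qPoch (q ^ 2) (q ^ 2) k * qPoch (q ^ (2 * v + 2 : ℝ)) (q ^ 2) k)

lemma jvR_eq_tsum (v q x : ℝ) : jvR v q x = ∑' k, jvRCoeff v q k * (x ^ 2) ^ k := by
  simp only [jvR, jvRCoeff, ← pow_mul]
  exact tsum_congr fun k => by ring

lemma one_sub_sq_mul_one_sub_rpow_pos {q v : ℝ} (hq0 : 0 < q) (hq1 : q < 1) (hv : -1 < v) :
    0 < (1 - q ^ 2) * (1 - q ^ (2 * v + 2 : ℝ)) := by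
  have : q ^ 2 < 1 := by nlinarith
  have : q ^ (2 * v + 2 : ℝ) < 1 := Real.rpow_lt_one hq0.le hq1 (by linarith)
  exact mul_pos (by linarith) (by linarith)

lemma pow_le_jvRCoeff_denom {q v : ℝ} (hq0 : 0 < q) (hq1 : q < 1) (hv : -1 < v) (k : ℕ) :
    ((1 - q ^ 2) * (1 - q ^ (2 * v + 2 : ℝ))) ^ k ≤
      qPoch (q ^ 2) (q ^ 2) k * qPoch (q ^ (2 * v + 2 : ℝ)) (q ^ 2) k := by
  have hq2 : q ^ 2 < 1 := by nlinarith
  have hρ0 : 0 ≤ q ^ (2 * v + 2 : ℝ) := (Real.rpow_pos_of_pos hq0 _).le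
  have hρ1 : q ^ (2 * v + 2 : ℝ) ≤ 1 := (Real.rpow_lt_one hq0.le hq1 (by linarith)).le
  rw [mul_pow]
  exact mul_le_mul (pow_one_sub_le_qPoch (sq_nonneg q) hq2.le (sq_nonneg q) hq2.le k)
    (pow_one_sub_le_qPoch hρ0 hρ1 (sq_nonneg q) hq2.le k) (pow_nonneg (by linarith) k)
    (qPoch_pos_s5 (sq_nonneg q) hq2 (sq_nonneg q) hq2.le k).le

lemma abs_jvRCoeff_le {q v : ℝ} (hq0 : 0 < q) (hq1 : q < 1) (hv : -1 < v) (k : ℕ) :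
    |jvRCoeff v q k| ≤ ((1 - q ^ 2) * (1 - q ^ (2 * v + 2 : ℝ)))⁻¹ ^ k := by
  have hpos := pow_pos (one_sub_sq_mul_one_sub_rpow_pos hq0 hq1 hv) k
  have hden := pow_le_jvRCoeff_denom hq0 hq1 hv k
  rw [jvRCoeff, abs_div, abs_mul, abs_pow, abs_neg, abs_one, one_pow, one_mul,
    abs_of_pos (hpos.trans_le hden), abs_of_pos (pow_pos hq0 _), inv_pow, ← one_div]
  exact div_le_div₀ zero_le_one (pow_le_one₀ hq0.le hq1.le) hpos hden

lemma jvRCoeff_ne_zero {q v : ℝ} (hq0 : 0 < q) (hq1 : q < 1) (hv : -1 < v) (k : ℕ) :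
    jvRCoeff v q k ≠ 0 :=
  div_ne_zero (mul_ne_zero (pow_ne_zero _ (by norm_num)) (pow_ne_zero _ hq0.ne'))
    ((pow_pos (one_sub_sq_mul_one_sub_rpow_pos hq0 hq1 hv) k).trans_le
      (pow_le_jvRCoeff_denom hq0 hq1 hv k)).ne'

lemma zero_lt_radius_ofScalars {c : ℕ → ℝ} {C τ : ℝ} (hτ : 0 ≤ τ)
    (hc : ∀ k, |c k| ≤ C * τ ^ k) : 0 < (ofScalars ℝ c).radius := by
  have hC : 0 ≤ C := by simpa using (abs_nonneg _).trans (hc 0)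
  have hr : 0 < (τ + 1)⁻¹ := by positivity
  refine lt_of_lt_of_le (ENNReal.coe_pos.mpr (Real.toNNReal_pos.mpr hr))
    ((ofScalars ℝ c).le_radius_of_bound C fun n => ?_)
  rw [ofScalars_norm, Real.norm_eq_abs, Real.coe_toNNReal _ hr.le]
  calc |c n| * (τ + 1)⁻¹ ^ n ≤ C * τ ^ n * (τ + 1)⁻¹ ^ n := by gcongr; exact hc n
    _ = C * (τ / (τ + 1)) ^ n := by rw [mul_assoc, ← mul_pow, div_eq_mul_inv]
    _ ≤ C := mul_le_of_le_one_right hC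
      (pow_le_one₀ (by positivity) ((div_le_one (by positivity)).mpr (by linarith)))

theorem eq_zero_of_tsum_mul_pow_eq_zero {c : ℕ → ℝ} (hc : 0 < (ofScalars ℝ c).radius)
    {x : ℕ → ℝ} (hx : Tendsto x atTop (𝓝[≠] 0)) (h : ∀ᶠ s in atTop, ∑' k, c k * x s ^ k = 0) :
    c = 0 := by
  have hp : HasFPowerSeriesAt (ofScalarsSum c) (ofScalars ℝ c) 0 :=
    ((ofScalars ℝ c).hasFPowerSeriesOnBall hc).hasFPowerSeriesAt
  have hfreq : ∃ᶠ z in 𝓝[≠] (0 : ℝ), ofScalarsSum c z = 0 :=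
    hx.frequently (h.mono fun s hs => by simpa [ofScalars_sum_eq] using hs).frequently
  exact (ofScalars_series_eq_zero ℝ).mp
    (hp.eq_zero_of_eventually (hp.analyticAt.frequently_zero_iff_eventually_zero.mp hfreq))

lemma tsum_mul_tsum_mul_pow_comm {g b u : ℕ → ℝ} {y U : ℝ} (hg : Summable fun n => |g n|)
    (hu : ∀ n, |u n| ≤ U) (hb : Summable fun k => |b k| * (|y| * U) ^ k) :
    ∑' n, g n * ∑' k, b k * (y * u n) ^ k = ∑' k, b k * y ^ k * ∑' n, g n * u n ^ k := by
  have hF : Summable (Function.uncurry fun n k => g n * (b k * (y * u n) ^ k)) := by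
    refine Summable.of_norm_bounded (hg.mul_of_nonneg hb (fun n => abs_nonneg _)
      fun k => mul_nonneg (abs_nonneg _) (pow_nonneg ?_ k)) fun ⟨n, k⟩ => ?_
    · exact mul_nonneg (abs_nonneg y) ((abs_nonneg _).trans (hu 0))
    · simp only [Function.uncurry_apply_pair, Real.norm_eq_abs, abs_mul, abs_pow]
      gcongr
      exact hu n
  simp_rw [← tsum_mul_left]
  rw [← hF.tsum_comm]
  exact tsum_congr fun k => tsum_congr fun n => by ring

lemma summable_abs_mul_of_summable_mul_sq {ι : Type*} {w f : ι → ℝ} (hw0 : ∀ i, 0 ≤ w i)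
    (hw : Summable w) (hwf : Summable fun i => w i * f i ^ 2) :
    Summable fun i => |w i * f i| := by
  refine Summable.of_nonneg_of_le (fun i => abs_nonneg _) (fun i => ?_) ((hw.add hwf).div_const 2)
  have key : 0 ≤ w i * (1 - |f i|) ^ 2 := mul_nonneg (hw0 i) (sq_nonneg _)
  rw [abs_mul, abs_of_nonneg (hw0 i), ← sq_abs (f i)]
  nlinarith [key]

lemma pow_mul_mul_pow_rpow {q a : ℝ} (hq : 0 < q) (ha : 0 ≤ a) (s : ℝ) (n : ℕ) :
    q ^ n * (a * q ^ n) ^ s = a ^ s * (q ^ (s + 1)) ^ n := by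
  rw [Real.mul_rpow ha (pow_nonneg hq.le n), ← Real.rpow_natCast_mul hq.le, mul_comm (n : ℝ),
    Real.rpow_mul_natCast hq.le, Real.rpow_add_one hq.ne', mul_pow]
  ring

lemma tendsto_mul_pow_nhdsNE_zero {a r : ℝ} (ha : a ≠ 0) (hr0 : 0 < r) (hr1 : r < 1) :
    Tendsto (fun n : ℕ => a * r ^ n) atTop (𝓝[≠] 0) :=
  tendsto_nhdsWithin_iff.mpr
    ⟨by simpa using (tendsto_pow_atTop_nhds_zero_of_lt_one hr0.le hr1).const_mul a,
      Eventually.of_forall fun n => mul_ne_zero ha (pow_ne_zero n hr0.ne')⟩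

theorem tsum_mul_sq_pow_eq_zero_of_tsum_mul_jvR_eq_zero {q v : ℝ} (hq0 : 0 < q) (hq1 : q < 1)
    (hv : -1 < v) {g u : ℕ → ℝ} {U : ℝ} (hg : Summable fun n => |g n|) (hu : ∀ n, |u n| ≤ U)
    {x : ℕ → ℝ} (hx : Tendsto x atTop (𝓝[≠] 0))
    (h : ∀ s, ∑' n, g n * jvR v q (x s * u n) = 0) (k : ℕ) :
    ∑' n, g n * (u n ^ 2) ^ k = 0 := by
  set τ := ((1 - q ^ 2) * (1 - q ^ (2 * v + 2 : ℝ)))⁻¹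
  have hτ : 0 < τ := inv_pos.mpr (one_sub_sq_mul_one_sub_rpow_pos hq0 hq1 hv)
  set M : ℕ → ℝ := fun k => ∑' n, g n * (u n ^ 2) ^ k
  have hu2 : ∀ n, |u n ^ 2| ≤ U ^ 2 := fun n => by
    rw [abs_pow]; exact pow_le_pow_left₀ (abs_nonneg _) (hu n) 2
  have hM : ∀ k, |M k| ≤ (∑' n, |g n|) * (U ^ 2) ^ k := fun k =>
    tsum_of_norm_bounded (f := fun n => g n * (u n ^ 2) ^ k) (hg.hasSum.mul_right _) fun n => by
      rw [Real.norm_eq_abs, abs_mul, abs_pow]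
      exact mul_le_mul_of_nonneg_left (pow_le_pow_left₀ (abs_nonneg _) (hu2 n) k) (abs_nonneg _)
  have hcoeff : ∀ k, |jvRCoeff v q k * M k| ≤ (∑' n, |g n|) * (τ * U ^ 2) ^ k := fun k =>
    calc |jvRCoeff v q k * M k| = |jvRCoeff v q k| * |M k| := abs_mul _ _
      _ ≤ τ ^ k * ((∑' n, |g n|) * (U ^ 2) ^ k) :=
        mul_le_mul (abs_jvRCoeff_le hq0 hq1 hv k) (hM k) (abs_nonneg _) (pow_nonneg hτ.le k)
      _ = (∑' n, |g n|) * (τ * U ^ 2) ^ k := by ring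
  have hx2 : Tendsto (fun s => x s ^ 2) atTop (𝓝[≠] 0) := by
    obtain ⟨hx0, hxne⟩ := tendsto_nhdsWithin_iff.mp hx
    exact tendsto_nhdsWithin_iff.mpr
      ⟨by simpa using hx0.pow 2, hxne.mono fun s hs => pow_ne_zero 2 hs⟩
  have hsmall : ∀ᶠ s in atTop, τ * |x s ^ 2| * U ^ 2 < 1 := by
    have := ((hx2.mono_right nhdsWithin_le_nhds).abs.const_mul τ).mul_const (U ^ 2)
    simp only [abs_zero, mul_zero, zero_mul] at this
    exact this.eventually_lt_const one_pos
  have hseries : ∀ᶠ s in atTop, ∑' k, jvRCoeff v q k * M k * (x s ^ 2) ^ k = 0 := by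
    filter_upwards [hsmall] with s hs
    have hb : Summable fun k => |jvRCoeff v q k| * (|x s ^ 2| * U ^ 2) ^ k := by
      refine Summable.of_nonneg_of_le (fun k => by positivity) (fun k => ?_)
        (summable_geometric_of_lt_one (by positivity) hs)
      calc |jvRCoeff v q k| * (|x s ^ 2| * U ^ 2) ^ k ≤ τ ^ k * (|x s ^ 2| * U ^ 2) ^ k := by
            gcongr; exact abs_jvRCoeff_le hq0 hq1 hv k
        _ = (τ * |x s ^ 2| * U ^ 2) ^ k := by ring
    calc ∑' k, jvRCoeff v q k * M k * (x s ^ 2) ^ k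
        = ∑' k, jvRCoeff v q k * (x s ^ 2) ^ k * M k := tsum_congr fun k => by ring
      _ = ∑' n, g n * ∑' k, jvRCoeff v q k * (x s ^ 2 * u n ^ 2) ^ k :=
        (tsum_mul_tsum_mul_pow_comm hg hu2 hb).symm
      _ = ∑' n, g n * jvR v q (x s * u n) := by simp only [jvR_eq_tsum, mul_pow]
      _ = 0 := h s
  have hzero := eq_zero_of_tsum_mul_pow_eq_zero (zero_lt_radius_ofScalars (by positivity) hcoeff)
    hx2 hseries
  exact (mul_eq_zero.mp (congrFun hzero k)).resolve_left (jvRCoeff_ne_zero hq0 hq1 hv k)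

lemma eq_zero_of_forall_tsum_mul_mul_pow_pow_eq_zero {g : ℕ → ℝ} {a r : ℝ} (ha : a ≠ 0)
    (hr0 : 0 < r) (hr1 : r < 1) (hg : Summable fun n => |g n|)
    (h : ∀ k, ∑' n, g n * (a * r ^ n) ^ k = 0) : g = 0 := by
  have hgeom : ∀ k, ∑' n, g n * (r ^ k) ^ n = 0 := fun k => by
    have e : ∀ n, g n * (a * r ^ n) ^ k = a ^ k * (g n * (r ^ k) ^ n) := fun n => by ring
    have := h k
    rw [tsum_congr e, tsum_mul_left] at this
    exact (mul_eq_zero.mp this).resolve_left (pow_ne_zero k ha)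
  exact eq_zero_of_tsum_mul_pow_eq_zero
    (zero_lt_radius_ofScalars zero_le_one fun n => by
      simpa using hg.le_tsum n fun _ _ => abs_nonneg _)
    (by simpa using tendsto_mul_pow_nhdsNE_zero one_ne_zero hr0 hr1) (Eventually.of_forall hgeom)

noncomputable def jacksonWeight (q v a : ℝ) (n : ℕ) : ℝ := q ^ n * (a * q ^ n) ^ (2 * v + 1 : ℝ)

section jacksonWeight

variable {q v a : ℝ}

lemma jacksonWeight_pos (hq0 : 0 < q) (ha : 0 < a) (n : ℕ) : 0 < jacksonWeight q v a n := by
  unfold jacksonWeight; positivity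

lemma summable_jacksonWeight (hq0 : 0 < q) (hq1 : q < 1) (hv : -1 < v) (ha : 0 ≤ a) :
    Summable (jacksonWeight q v a) := by
  rw [show jacksonWeight q v a = _ from funext (pow_mul_mul_pow_rpow hq0 ha (2 * v + 1))]
  exact (summable_geometric_of_lt_one (by positivity)
    (Real.rpow_lt_one hq0.le hq1 (by linarith))).mul_left _

lemma summable_abs_jacksonWeight_mul_of_memL2a (hq0 : 0 < q) (hq1 : q < 1) (hv : -1 < v)
    (ha : 0 < a) {ψ : ℝ → ℝ} (hψ : memL2a q v a ψ) :
    Summable fun n => |jacksonWeight q v a n * ψ (a * q ^ n)| :=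
  summable_abs_mul_of_summable_mul_sq (fun n => (jacksonWeight_pos hq0 ha n).le)
    (summable_jacksonWeight hq0 hq1 hv ha.le) (hψ.congr fun n => by simp only [jacksonWeight]; ring)

lemma tsum_jacksonWeight_mul_jvR_eq_zero_of_Tav_eq_zero (hq0 : 0 < q) (hq1 : q < 1)
    (hv : -1 < v) (ha : 0 < a) {ψ : ℝ → ℝ} {x : ℝ} (h : Tav q v a ψ x = 0) :
    ∑' n, jacksonWeight q v a n * ψ (a * q ^ n) * jvR v q (x * (a * q ^ n)) = 0 := by
  have hne : cqv q v * ((1 - q) * a) ≠ 0 :=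
    mul_ne_zero (cqv_pos hq0 hq1 hv).ne' (mul_pos (by linarith) ha).ne'
  rw [Tav, qInt0, ← mul_assoc, mul_eq_zero, or_iff_right hne] at h
  rw [← h]
  exact tsum_congr fun n => by simp only [jacksonWeight]; ring

end jacksonWeight

/-- `T_a^v` is injective, so 0 is not an eigenvalue. -/
theorem Tav_injective (q v : ℝ) (hq0 : 0 < q) (hq1 : q < 1) (hv : -1 < v)
    (n₀ : ℤ) (a : ℝ) (ha : a = (q : ℝ) ^ n₀)
    (ψ : ℝ → ℝ) (hψ : memL2a q v a ψ)
    (h0 : ∀ s : ℕ, Tav q v a ψ (a * q ^ s) = 0) :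
    ∀ s : ℕ, ψ (a * q ^ s) = 0 := by
  have ha0 : 0 < a := ha ▸ zpow_pos hq0 n₀
  set g : ℕ → ℝ := fun n => jacksonWeight q v a n * ψ (a * q ^ n)
  have hg : Summable fun n => |g n| := summable_abs_jacksonWeight_mul_of_memL2a hq0 hq1 hv ha0 hψ
  have hnodes : ∀ n, |a * q ^ n| ≤ a := fun n => by
    rw [abs_of_pos (by positivity)]
    exact mul_le_of_le_one_right ha0.le (pow_le_one₀ hq0.le hq1.le)
  have hmoment := tsum_mul_sq_pow_eq_zero_of_tsum_mul_jvR_eq_zero hq0 hq1 hv hg hnodes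
    (tendsto_mul_pow_nhdsNE_zero ha0.ne' hq0 hq1)
    fun s => tsum_jacksonWeight_mul_jvR_eq_zero_of_Tav_eq_zero hq0 hq1 hv ha0 (h0 s)
  have hzero : g = 0 := eq_zero_of_forall_tsum_mul_mul_pow_pow_eq_zero (pow_ne_zero 2 ha0.ne')
    (pow_pos hq0 2) (by nlinarith) hg fun k => by
      rw [← hmoment k]
      exact tsum_congr fun n => by ring
  exact fun s => (mul_eq_zero.mp (congrFun hzero s)).resolve_left (jacksonWeight_pos hq0 ha0 s).ne'
end
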